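/- Let ρ ∈ (0,1], let v be a unit vector in ℝ³, and let T = T(v, y₀, s₀, C₁ρ, L) be a tube of radius C₁ρ and length parameter L ≥ 1 with axis parallel to v. Let φ ∈ L²(ℝ³) satisfy |φ(x)| ≤ A ρ⁻¹ (1 + dist(x,T)/ρ)^{−N} for all x ∈ ℝ³, with constants A ≥ 1 and N > 2. Then for every positive Borel measure μ on ℝ³, ∫_{ℝ³} |φ(x)|² dμ(x) ≤ C A² ρ⁻² Σ_{k=0}^{∞} 2^{−2Nk} (π_v)_#μ(B_{v^⊥}(y₀, C·2^k ρ)), where C ≥ 1 depends only on N, C₁, and L. -/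

import Mathlib

noncomputable section
open MeasureTheory Metric Set Function
open scoped ENNReal RealInnerProductSpace

abbrev E3 : Type := EuclideanSpace ℝ (Fin 3)

/-- The tube `T(v, y₀, s₀, r, L) = {y + s v : y ∈ v^⊥, |y − y₀| ≤ r, |s − s₀| ≤ L}`. -/
def tube (v y₀ : E3) (s₀ r L : ℝ) : Set E3 :=
  {x | ‖x - ⟪x, v⟫ • v - y₀‖ ≤ r ∧ |⟪x, v⟫ - s₀| ≤ L}

/-- Orthogonal projection onto the plane `v^⊥`. -/
def projPerp (v x : E3) : E3 := x - ⟪x, v⟫ • v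

/-! Cut space into the dyadic shells where `1 + dist(x, T)/ρ ∈ [2^k, 2^(k+1))`. On the `k`-th
shell the decay hypothesis gives `|φ|² ≤ A²ρ⁻²2^(-2Nk)`, and since `π_v` is `1`-Lipschitz and maps
`T` into `B(y₀, C₁ρ)`, the shell projects into `B(y₀, (C₁ + 2)2^kρ)`. Summing over shells bounds the
energy by the dyadic projected masses with `C = C₁ + 2`. -/

theorem MeasureTheory.lintegral_le_tsum_mul_measure {α : Type*} [MeasurableSpace α]
    (μ : Measure α) {f : α → ℝ≥0∞} {S : ℕ → Set α} (hS : ∀ k, MeasurableSet (S k))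
    {c : ℕ → ℝ≥0∞} (hf : ∀ x, ∃ k, x ∈ S k ∧ f x ≤ c k) :
    ∫⁻ x, f x ∂μ ≤ ∑' k, c k * μ (S k) := by
  have hpt : ∀ x, f x ≤ ∑' k, (S k).indicator (fun _ => c k) x := fun x => by
    obtain ⟨k, hxk, hfk⟩ := hf x
    exact (hfk.trans_eq (indicator_of_mem hxk fun _ => c k).symm).trans (ENNReal.le_tsum k)
  calc ∫⁻ x, f x ∂μ ≤ ∫⁻ x, ∑' k, (S k).indicator (fun _ => c k) x ∂μ := lintegral_mono hpt
    _ = ∑' k, c k * μ (S k) := by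
      rw [lintegral_tsum fun k => (measurable_const.indicator (hS k)).aemeasurable]
      simp only [lintegral_indicator_const (hS _)]

theorem Metric.dist_le_infDist_add_of_mapsTo {α β : Type*} [PseudoMetricSpace α]
    [PseudoMetricSpace β] {f : α → β} (hf : LipschitzWith 1 f) {s : Set α} (hs : s.Nonempty)
    {y : β} {r : ℝ} (hfs : MapsTo f s (closedBall y r)) (x : α) :
    dist (f x) y ≤ infDist x s + r := by
  suffices dist (f x) y - r ≤ infDist x s by linarith
  refine (le_infDist hs).2 fun z hz => ?_
  have hfz : dist (f x) (f z) ≤ dist x z := by simpa using hf.dist_le_mul x z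
  linarith [dist_triangle (f x) (f z) y, mem_closedBall.1 (hfs hz)]

theorem exists_two_pow_le_one_add_div {d ρ : ℝ} (hd : 0 ≤ d) (hρ : 0 < ρ) {r : ℝ} (hr : 0 ≤ r) :
    ∃ k : ℕ, (2 : ℝ) ^ k ≤ 1 + d / ρ ∧ d + r * ρ ≤ (r + 2) * 2 ^ k * ρ := by
  obtain ⟨k, hk, hk1⟩ := exists_nat_pow_near (x := 1 + d / ρ) (by simp; positivity) one_lt_two
  refine ⟨k, hk, ?_⟩
  have hd' : d < (2 * 2 ^ k - 1) * ρ := by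
    rw [pow_succ] at hk1
    have := (div_lt_iff₀ hρ).1 (by linarith : d / ρ < 2 ^ k * 2 - 1)
    linarith
  have : r * ρ ≤ r * 2 ^ k * ρ := by
    have := one_le_pow₀ (M₀ := ℝ) (n := k) one_le_two
    nlinarith [mul_nonneg hr hρ.le]
  nlinarith

theorem sq_mul_rpow_neg_le {N t : ℝ} (hN : 0 ≤ N) {k : ℕ} (hk : (2 : ℝ) ^ k ≤ t) (a : ℝ) :
    (a * t ^ (-N)) ^ 2 ≤ a ^ 2 * 2 ^ (-(2 * N * k)) := by
  have h2k : (0 : ℝ) < 2 ^ k := by positivity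
  have hdecay : t ^ (-N) ≤ ((2 : ℝ) ^ k) ^ (-N) := Real.rpow_le_rpow_of_nonpos h2k hk (by linarith)
  calc (a * t ^ (-N)) ^ 2 ≤ a ^ 2 * (((2 : ℝ) ^ k) ^ (-N)) ^ 2 := by
        rw [mul_pow]
        gcongr
        exact Real.rpow_nonneg (h2k.le.trans hk) _
    _ = a ^ 2 * 2 ^ (-(2 * N * k)) := by
        rw [← Real.rpow_natCast (((2 : ℝ) ^ k) ^ (-N)), ← Real.rpow_natCast (2 : ℝ) k,
          ← Real.rpow_mul zero_le_two, ← Real.rpow_mul zero_le_two]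
        ring_nf

theorem enorm_sq_le_ofReal {F : Type*} [NormedAddCommGroup F] {z : F} {b : ℝ} (h : ‖z‖ ^ 2 ≤ b) :
    (‖z‖₊ : ℝ≥0∞) ^ 2 ≤ ENNReal.ofReal b := by
  rw [← enorm_eq_nnnorm, ← ofReal_norm, ← ENNReal.ofReal_pow (norm_nonneg _)]
  exact ENNReal.ofReal_le_ofReal h

theorem projPerp_eq_starProjection {v : E3} (hv : ‖v‖ = 1) :
    projPerp v = (ℝ ∙ v)ᗮ.starProjection := by
  ext1 x
  rw [Submodule.starProjection_orthogonal_val, Submodule.starProjection_unit_singleton ℝ hv,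
    real_inner_comm, projPerp]

theorem lipschitzWith_projPerp {v : E3} (hv : ‖v‖ = 1) : LipschitzWith 1 (projPerp v) :=
  projPerp_eq_starProjection hv ▸ Submodule.lipschitzWith_starProjection _

theorem measurable_projPerp (v : E3) : Measurable (projPerp v) := by
  unfold projPerp; fun_prop

theorem mapsTo_projPerp_tube (v y₀ : E3) (s₀ r L : ℝ) :
    MapsTo (projPerp v) (tube v y₀ s₀ r L) (closedBall y₀ r) :=
  fun _ hx => mem_closedBall_iff_norm.2 hx.1

theorem tube_nonempty {v y₀ : E3} (hv : ‖v‖ = 1) (hy₀ : ⟪y₀, v⟫ = 0) (s₀ : ℝ) {r L : ℝ}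
    (hr : 0 ≤ r) (hL : 0 ≤ L) : (tube v y₀ s₀ r L).Nonempty := by
  have hs : ⟪y₀ + s₀ • v, v⟫ = s₀ := by
    rw [inner_add_left, hy₀, real_inner_smul_left, real_inner_self_eq_norm_sq, hv]
    ring
  exact ⟨y₀ + s₀ • v, by simp [tube, hs, hr, hL]⟩

/-- reduction of tubular energy to dyadic projected masses. -/
theorem wave_packet_energy_projection (N C₁ L : ℝ) (hN : 2 < N) (hC₁ : 1 ≤ C₁)
    (hL : 1 ≤ L) :
    ∃ C : ℝ, 1 ≤ C ∧
      ∀ ρ : ℝ, ρ ∈ Set.Ioc (0 : ℝ) 1 →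
      ∀ v y₀ : E3, ‖v‖ = 1 → ⟪y₀, v⟫ = 0 → ∀ s₀ : ℝ,
      ∀ A : ℝ, 1 ≤ A → ∀ φ : E3 → ℂ, MemLp φ 2 volume →
        (∀ x : E3,
          ‖φ x‖ ≤ A * ρ⁻¹ * (1 + infDist x (tube v y₀ s₀ (C₁ * ρ) L) / ρ) ^ (-N)) →
        ∀ μ : Measure E3,
          (∫⁻ x, ((‖φ x‖₊ : ℝ≥0∞)) ^ 2 ∂μ) ≤
            ENNReal.ofReal (C * A ^ 2 / ρ ^ 2) *
              ∑' k : ℕ, ENNReal.ofReal ((2 : ℝ) ^ (-(2 * N * (k : ℝ)))) *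
                Measure.map (projPerp v) μ (Metric.closedBall y₀ (C * 2 ^ k * ρ)) := by
  refine ⟨C₁ + 2, by linarith, ?_⟩
  rintro ρ ⟨hρ, -⟩ v y₀ hv hy₀ s₀ A - φ - hφ μ
  set T := tube v y₀ s₀ (C₁ * ρ) L
  have hT : T.Nonempty := tube_nonempty hv hy₀ s₀ (by positivity) (by linarith)
  have hS : ∀ k : ℕ, MeasurableSet (projPerp v ⁻¹' closedBall y₀ ((C₁ + 2) * 2 ^ k * ρ)) :=
    fun k => measurable_projPerp v measurableSet_closedBall
  simp only [← ENNReal.tsum_mul_left, ← mul_assoc,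
    ← ENNReal.ofReal_mul (by positivity : 0 ≤ (C₁ + 2) * A ^ 2 / ρ ^ 2),
    Measure.map_apply (measurable_projPerp v) measurableSet_closedBall]
  refine lintegral_le_tsum_mul_measure μ hS fun x => ?_
  obtain ⟨k, hk, hdk⟩ :=
    exists_two_pow_le_one_add_div (infDist_nonneg (x := x) (s := T)) hρ (by linarith : 0 ≤ C₁)
  refine ⟨k, ?_, enorm_sq_le_ofReal ?_⟩
  · have := dist_le_infDist_add_of_mapsTo (lipschitzWith_projPerp hv) hT
      (mapsTo_projPerp_tube v y₀ s₀ (C₁ * ρ) L) x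
    exact (this.trans hdk : dist _ _ ≤ _)
  calc ‖φ x‖ ^ 2 ≤ (A * ρ⁻¹) ^ 2 * 2 ^ (-(2 * N * k)) :=
        (pow_le_pow_left₀ (norm_nonneg _) (hφ x) 2).trans (sq_mul_rpow_neg_le (by linarith) hk _)
    _ ≤ (C₁ + 2) * A ^ 2 / ρ ^ 2 * 2 ^ (-(2 * N * k)) := by
        rw [mul_pow, inv_pow, ← div_eq_mul_inv, mul_div_assoc]
        gcongr
        exact le_mul_of_one_le_left (by positivity) (by linarith)
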